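/- For every integer α and every integer l ≥ 1, the identity Σ_{j=0}^{l} f_j(α)·g_{l−j}(α+j) = 0 holds in ℚ(q). (This expresses that the two triangular transition matrices of the paper's Proposition 4.15 — between the monomial basis B₂^(b−k)B₁^(c−k)η and the icanonical basis 𝔅₂^(0,b−k,c−k) on L(m,n) — are mutually inverse; the proof does not depend on the value of α.) -/

import Mathlib

open scoped BigOperators

/-- The generator `q` of the field of rational functions `ℚ(q)`. -/
noncomputable def q : RatFunc ℚ := RatFunc.X

/-- The balanced quantum integer `[a] = (q^a - q^(-a))/(q - q⁻¹)`. -/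
noncomputable def qint (a : ℤ) : RatFunc ℚ := (q ^ a - q ^ (-a)) / (q - q⁻¹)

/-- The quantum factorial `[k]! = [1][2]⋯[k]`. -/
noncomputable def qfact (k : ℕ) : RatFunc ℚ := ∏ i ∈ Finset.range k, qint ((i : ℤ) + 1)

/-- The balanced quantum binomial `qbinom a b = [a][a-1]⋯[a-b+1]/[b]!` for `b ≥ 0`,
and `0` for `b < 0`. -/
noncomputable def qbinom (a b : ℤ) : RatFunc ℚ :=
  if b < 0 then 0
  else (∏ i ∈ Finset.range b.toNat, qint (a - (i : ℤ))) / qfact b.toNat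

/-- The coefficient `f_k(α)` of Proposition 4.15: `f_0(α) = 1`; for `k ≥ 1`,
`f_k(α) = [α]·([α−k+2][α−k+4]⋯[α+k−2])/[k]!` if `k ≡ α (mod 2)` and
`f_k(α) = ([α−k+1][α−k+3]⋯[α+k−1])/[k]!` otherwise. -/
noncomputable def fcoef (α : ℤ) (k : ℕ) : RatFunc ℚ :=
  if k = 0 then 1
  else if (α - (k : ℤ)) % 2 = 0 then
    qint α * (∏ i ∈ Finset.range (k - 1), qint (α - (k : ℤ) + 2 * ((i : ℤ) + 1))) / qfact k
  else (∏ i ∈ Finset.range k, qint (α - (k : ℤ) + 1 + 2 * (i : ℤ))) / qfact k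

/-- The coefficient `g_k(α)` of Proposition 4.15: `g_0(α) = 1`; for `k ≥ 1`,
`g_k(α) = (−1)^k·([α][α+2]⋯[α+2k−2])/[k]!` if `α` is even and
`g_k(α) = (−1)^k·[α+k−1]·([α+1][α+3]⋯[α+2k−3])/[k]!` if `α` is odd. -/
noncomputable def gcoef (α : ℤ) (k : ℕ) : RatFunc ℚ :=
  if k = 0 then 1
  else if α % 2 = 0 then
    (-1 : RatFunc ℚ) ^ k * (∏ i ∈ Finset.range k, qint (α + 2 * (i : ℤ))) / qfact k
  else
    (-1 : RatFunc ℚ) ^ k * qint (α + (k : ℤ) - 1) *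
      (∏ i ∈ Finset.range (k - 1), qint (α + 2 * ((i : ℤ) + 1) - 1)) / qfact k

/-!
Write `T_j = f_j(α) g_{l-j}(α+j)`. From the recurrences of `f` in `j` and of `g` in `k`, the ratio
`T_{j+1}/T_j` is a quotient of `q`-integers, and the partial sums telescope:
`[l][α][α+l-1] · Σ_{j<m} T_j = -[m] c_m T_m`, where `c_m` (`telescopeCoeff`) depends only on the
parity of `α - m`. The inductive step is the three-term identity
`[a][b] = [c][a+b-c] + [a-c][b-c]`. At `m = l` the right-hand side is `-[l][α][α+l-1] T_l`, so the
full sum vanishes whenever `[α][α+l-1] ≠ 0`; in the two remaining cases `α = 0`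
and `α = 1 - l` every single term `T_j` contains a factor `[0]`.
-/

open Finset

lemma q_zpow_injective : Function.Injective fun n : ℤ => q ^ n := by
  classical
  intro m n h
  simpa [q] using congrArg (RatFunc.inftyValuation ℚ) h

lemma q_sub_inv_ne_zero : q - q⁻¹ ≠ 0 := by
  simpa [sub_ne_zero] using q_zpow_injective.ne (by norm_num : (1 : ℤ) ≠ -1)

@[simp]
lemma qint_eq_zero_iff {a : ℤ} : qint a = 0 ↔ a = 0 := by
  rw [qint, div_eq_zero_iff, or_iff_left q_sub_inv_ne_zero, sub_eq_zero,
    q_zpow_injective.eq_iff]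
  omega

@[simp]
lemma qint_one : qint 1 = 1 := by
  rw [qint, zpow_one, zpow_neg_one, div_self q_sub_inv_ne_zero]

lemma qint_mul_qint (a b c : ℤ) :
    qint a * qint b = qint c * qint (a + b - c) + qint (a - c) * qint (b - c) := by
  have hq : q ≠ 0 := RatFunc.X_ne_zero
  simp only [qint, zpow_neg, zpow_sub₀ hq, zpow_add₀ hq]
  have := zpow_ne_zero a hq
  have := zpow_ne_zero b hq
  have := zpow_ne_zero c hq
  field_simp
  ring

@[simp]
lemma qfact_zero : qfact 0 = 1 := prod_range_zero _

lemma qfact_succ (k : ℕ) : qfact (k + 1) = qfact k * qint (k + 1) := prod_range_succ _ _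

lemma qfact_ne_zero (k : ℕ) : qfact k ≠ 0 :=
  prod_ne_zero_iff.mpr fun i _ => qint_eq_zero_iff.not.mpr (by omega)

noncomputable def qprod2 (a : ℤ) (n : ℕ) : RatFunc ℚ := ∏ i ∈ range n, qint (a + 2 * i)

@[simp]
lemma qprod2_zero (a : ℤ) : qprod2 a 0 = 1 := prod_range_zero _

lemma qprod2_succ (a : ℤ) (n : ℕ) : qprod2 a (n + 1) = qprod2 a n * qint (a + 2 * n) :=
  prod_range_succ _ _

lemma qprod2_succ' (a : ℤ) (n : ℕ) : qprod2 a (n + 1) = qint a * qprod2 (a + 2) n := by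
  rw [qprod2, prod_range_succ', mul_comm, qprod2]
  push_cast
  simp only [mul_add, add_assoc, add_comm (2 : ℤ), add_zero, mul_one]

lemma qprod2_eq_zero {a : ℤ} {n : ℕ} (ha : a ≤ 0) (hn : -a < 2 * n) (hpar : a % 2 = 0) :
    qprod2 a n = 0 :=
  prod_eq_zero (i := (-a).toNat / 2) (mem_range.mpr (by omega)) (qint_eq_zero_iff.mpr (by omega))

lemma fcoef_of_odd {α : ℤ} {k : ℕ} (h : (α - k) % 2 ≠ 0) :
    fcoef α k = qprod2 (α - k + 1) k / qfact k := by
  rcases k with _ | k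
  · simp [fcoef]
  · rw [fcoef, if_neg k.succ_ne_zero, if_neg h, qprod2]

lemma fcoef_succ_of_even {α : ℤ} {k : ℕ} (h : (α - (k + 1 : ℕ)) % 2 = 0) :
    fcoef α (k + 1) = qint α * qprod2 (α - k + 1) k / qfact (k + 1) := by
  rw [fcoef, if_neg k.succ_ne_zero, if_pos h, Nat.add_sub_cancel, qprod2]
  congr 3 with i
  push_cast
  ring_nf

@[simp]
lemma gcoef_zero (β : ℤ) : gcoef β 0 = 1 := if_pos rfl

lemma gcoef_of_even {β : ℤ} {k : ℕ} (h : β % 2 = 0) :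
    gcoef β k = (-1) ^ k * qprod2 β k / qfact k := by
  rcases k with _ | k
  · simp [gcoef]
  · rw [gcoef, if_neg k.succ_ne_zero, if_pos h, qprod2]

lemma gcoef_succ_of_odd {β : ℤ} {k : ℕ} (h : β % 2 ≠ 0) :
    gcoef β (k + 1) = (-1) ^ (k + 1) * qint (β + k) * qprod2 (β + 1) k / qfact (k + 1) := by
  rw [gcoef, if_neg k.succ_ne_zero, if_neg h, Nat.add_sub_cancel, qprod2]
  push_cast
  congr 3
  · ring_nf
  · congr 1 with i
    ring_nf

lemma qint_mul_fcoef_succ_of_odd {α : ℤ} {j : ℕ} (h : (α - j) % 2 ≠ 0) :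
    qint (j + 1) * fcoef α (j + 1) = qint α * fcoef α j := by
  rw [fcoef_succ_of_even (by push_cast; omega), fcoef_of_odd h, qfact_succ]
  field_simp [qfact_ne_zero j, qint_eq_zero_iff.not.mpr (by omega : (j : ℤ) + 1 ≠ 0)]

lemma qint_mul_fcoef_succ_of_even {α : ℤ} {j : ℕ} (h : (α - j) % 2 = 0) :
    qint α * qint (j + 1) * fcoef α (j + 1) = qint (α - j) * qint (α + j) * fcoef α j := by
  rw [fcoef_of_odd (by push_cast; omega), qfact_succ]
  rcases j with _ | i
  · simp [fcoef, qprod2_succ]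
  · rw [fcoef_succ_of_even h, qprod2_succ', qprod2_succ, qfact_succ]
    push_cast
    field_simp [qfact_ne_zero i, qint_eq_zero_iff.not.mpr (by omega : (i : ℤ) + 1 ≠ 0),
      qint_eq_zero_iff.not.mpr (by omega : (i : ℤ) + 1 + 1 ≠ 0)]
    ring_nf

lemma qint_mul_gcoef_succ_of_odd {β : ℤ} {k : ℕ} (h : β % 2 ≠ 0) :
    qint (k + 1) * gcoef β (k + 1) = -(qint (β + k) * gcoef (β + 1) k) := by
  rw [gcoef_succ_of_odd h, gcoef_of_even (by omega), qfact_succ, pow_succ]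
  field_simp [qfact_ne_zero k, qint_eq_zero_iff.not.mpr (by omega : (k : ℤ) + 1 ≠ 0)]

lemma qint_mul_gcoef_succ_of_even {β : ℤ} {k : ℕ} (h : β % 2 = 0) :
    qint β * qint (β + 2 * k) * gcoef (β + 1) k
      = -(qint (k + 1) * qint (β + k) * gcoef β (k + 1)) := by
  rw [gcoef_of_even h, qprod2_succ', qfact_succ, pow_succ]
  rcases k with _ | i
  · simp [gcoef]
  · rw [gcoef_succ_of_odd (by omega), qprod2_succ, qfact_succ]
    push_cast
    field_simp [qfact_ne_zero i, qint_eq_zero_iff.not.mpr (by omega : (i : ℤ) + 1 ≠ 0),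
      qint_eq_zero_iff.not.mpr (by omega : (i : ℤ) + 1 + 1 ≠ 0)]
    ring_nf

lemma fcoef_eq_zero {α : ℤ} {k : ℕ} (h₁ : -k < α) (h₂ : α < k) : fcoef α k = 0 := by
  by_cases hpar : (α - k) % 2 = 0
  · obtain ⟨j, rfl⟩ : ∃ j, k = j + 1 := ⟨k - 1, by omega⟩
    rw [fcoef_succ_of_even hpar]
    rcases eq_or_ne α 0 with rfl | hα
    · simp
    · rw [qprod2_eq_zero (by omega) (by omega) (by omega)]
      simp
  · rw [fcoef_of_odd hpar, qprod2_eq_zero (by omega) (by omega) (by omega), zero_div]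

lemma gcoef_eq_zero {β : ℤ} {k : ℕ} (h₁ : -k < β) (h₂ : β ≤ 0) : gcoef β k = 0 := by
  by_cases hpar : β % 2 = 0
  · rw [gcoef_of_even hpar, qprod2_eq_zero h₂ (by omega) hpar]
    simp
  · obtain ⟨j, rfl⟩ : ∃ j, k = j + 1 := ⟨k - 1, by omega⟩
    rw [gcoef_succ_of_odd hpar]
    rcases eq_or_ne (β + j) 0 with h | h
    · simp [h]
    · rw [qprod2_eq_zero (by omega) (by omega) (by omega)]
      simp

noncomputable def summand (α : ℤ) (l j : ℕ) : RatFunc ℚ :=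
  fcoef α j * gcoef (α + j) (l - j)

lemma summand_succ_of_odd {α : ℤ} {j l : ℕ} (hj : j < l) (h : (α - j) % 2 ≠ 0) :
    qint (j + 1) * qint (α + l - 1) * summand α l (j + 1)
      = -(qint α * qint (l - j) * summand α l j) := by
  obtain ⟨k, rfl⟩ : ∃ k, l = j + 1 + k := ⟨l - (j + 1), by omega⟩
  have hf := qint_mul_fcoef_succ_of_odd h
  have hg := qint_mul_gcoef_succ_of_odd (β := α + j) (k := k) (by omega)
  rw [summand, summand, show j + 1 + k - (j + 1) = k by omega,
    show j + 1 + k - j = k + 1 by omega]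
  push_cast at hg ⊢
  linear_combination (norm := ring_nf)
    qint (α + j + k) * gcoef (α + j + 1) k * hf + qint α * fcoef α j * hg

lemma summand_succ_of_even {α : ℤ} {j l : ℕ} (hj : j < l) (h : (α - j) % 2 = 0) :
    qint α * qint (j + 1) * qint (α + 2 * l - j - 2) * summand α l (j + 1)
      = -(qint (α - j) * qint (l - j) * qint (α + l - 1) * summand α l j) := by
  obtain ⟨k, rfl⟩ : ∃ k, l = j + 1 + k := ⟨l - (j + 1), by omega⟩
  have hf := qint_mul_fcoef_succ_of_even h
  have hg := qint_mul_gcoef_succ_of_even (β := α + j) (k := k) (by omega)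
  rw [summand, summand, show j + 1 + k - (j + 1) = k by omega,
    show j + 1 + k - j = k + 1 by omega]
  push_cast at hg ⊢
  linear_combination (norm := ring_nf)
    qint (α + j + 2 * k) * gcoef (α + j + 1) k * hf + qint (α - j) * fcoef α j * hg

lemma summand_eq_zero {α : ℤ} {j l : ℕ} (hl : 0 < l) (hα : α = 0 ∨ α + l - 1 = 0)
    (hj : j ≤ l) :
    summand α l j = 0 := by
  by_cases hf : -(j : ℤ) < α ∧ α < j
  · rw [summand, fcoef_eq_zero hf.1 hf.2, zero_mul]
  · rw [summand, gcoef_eq_zero (by omega) (by omega), mul_zero]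

noncomputable def telescopeCoeff (α : ℤ) (l m : ℕ) : RatFunc ℚ :=
  if (α - m) % 2 = 0 then qint (α + l - m) * qint (α + l - 1)
  else qint (α + 2 * l - m - 1) * qint α

lemma telescopeCoeff_self (α : ℤ) (l : ℕ) :
    telescopeCoeff α l l = qint α * qint (α + l - 1) := by
  unfold telescopeCoeff
  split_ifs <;> ring_nf

lemma qint_mul_sum_summand {α : ℤ} {l m : ℕ} (hm : m ≤ l) :
    qint l * qint α * qint (α + l - 1) * ∑ j ∈ range m, summand α l j
      = -(qint m * telescopeCoeff α l m * summand α l m) := by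
  induction m with
  | zero => simp
  | succ m ih =>
    rw [sum_range_succ, mul_add, ih (by omega), telescopeCoeff, telescopeCoeff]
    push_cast
    split_ifs with h₁ h₂ h₂
    · omega
    · have hterm := summand_succ_of_even (by omega : m < l) h₁
      have hkey := qint_mul_qint l α m
      linear_combination (norm := ring_nf) hterm + qint (α + l - 1) * summand α l m * hkey
    · have hterm := summand_succ_of_odd (by omega : m < l) h₁
      have hkey := qint_mul_qint l (α + l - 1) m
      linear_combination (norm := ring_nf)
        qint (α + l - m - 1) * hterm + qint α * summand α l m * hkey
    · omega

/-- The two triangular transition matrices of Proposition 4.15 are mutually inverse: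
for every `α ∈ ℤ` and `l ≥ 1`, `Σ_{j=0}^{l} f_j(α)·g_{l−j}(α+j) = 0`. -/
theorem fcoef_gcoef_inverse (α : ℤ) (l : ℕ) (hl : 1 ≤ l) :
    ∑ j ∈ Finset.range (l + 1), fcoef α j * gcoef (α + (j : ℤ)) (l - j) = 0 := by
  change ∑ j ∈ range (l + 1), summand α l j = 0
  by_cases hdeg : α = 0 ∨ α + l - 1 = 0
  · exact sum_eq_zero fun j hj => summand_eq_zero hl hdeg (mem_range_succ_iff.mp hj)
  have hN : qint l * qint α * qint (α + l - 1) ≠ 0 := by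
    simp only [ne_eq, mul_eq_zero, qint_eq_zero_iff]
    omega
  have hsum := qint_mul_sum_summand (α := α) (le_refl l)
  rw [telescopeCoeff_self, summand, Nat.sub_self, gcoef_zero] at hsum
  rw [sum_range_succ, summand, Nat.sub_self, gcoef_zero, ← mul_right_inj' hN, mul_add, hsum]
  ring
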